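/- arXiv:1207.3693 — 2 statements merged into one kernel-verified Lean document; each statement's English description precedes it below -/
import Mathlib

section
/- Let $A_1,\dots,A_k$ be $l\times l$ real matrices with nonnegative entries. Suppose that for every sequence $\bar a=(a_1,a_2,\dots)\in\{1,\dots,k\}^{\mathbb N}$ and every $n\ge 1$ there exists an integer $N\ge 0$ such that the product $A_{a_n}A_{a_{n+1}}\cdots A_{a_{n+N}}$ has all entries strictly positive, and let $N^{\bar a}_n$ denote the least such $N$. Then the set $\{N^{\bar a}_n : n\in\mathbb N,\ \bar a\in\{1,\dots,k\}^{\mathbb N}\}$ is bounded. -/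
open Filter Topology

noncomputable section

/-- Product of matrices `A (a 0) * A (a 1) * ⋯ * A (a (n-1))`,
representing `A_{a_1} A_{a_2} ⋯ A_{a_n}` for the (1-indexed) sequence `ā`. -/
def matSeq {l k : ℕ} {R : Type} [Semiring R] (A : Fin k → Matrix (Fin l) (Fin l) R) :
    (ℕ → Fin k) → ℕ → Matrix (Fin l) (Fin l) R
  | _, 0 => 1
  | a, n + 1 => A (a 0) * matSeq A (fun i => a (i + 1)) n

/-- Product `ω (a 0) * ⋯ * ω (a (n-1))`, representing `ω_{a_1} ⋯ ω_{a_n}`. -/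
def prodSeq {k : ℕ} (ω : Fin k → ℝ) : (ℕ → Fin k) → ℕ → ℝ
  | _, 0 => 1
  | a, n + 1 => ω (a 0) * prodSeq ω (fun i => a (i + 1)) n

open Classical in
/-- The metric on `Σ = {1,…,k}^ℕ`: `d(ā,b̄) = 1/L` where `L` is the least (1-indexed)
position where the sequences differ, and `0` if they are equal. -/
def dSigma {k : ℕ} (a b : ℕ → Fin k) : ℝ :=
  if h : ∃ n, a n ≠ b n then 1 / ((Nat.find h : ℝ) + 1) else 0

/-- The matrix `E^n_ā` with entries `(A^n_ā)_{ij} / (ω^n_ā V_j)`. -/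
def Emat {l k : ℕ} (A : Fin k → Matrix (Fin l) (Fin l) ℝ) (ω : Fin k → ℝ) (V : Fin l → ℝ)
    (a : ℕ → Fin k) (n : ℕ) : Matrix (Fin l) (Fin l) ℝ :=
  fun i j => matSeq A a n i j / (prodSeq ω a n * V j)

/-- The set of columns of `E^n_ā`, as vectors of `ℝ^l`. -/
def Ecols {l k : ℕ} (A : Fin k → Matrix (Fin l) (Fin l) ℝ) (ω : Fin k → ℝ) (V : Fin l → ℝ)
    (a : ℕ → Fin k) (n : ℕ) : Set (EuclideanSpace ℝ (Fin l)) :=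
  {v | ∃ j : Fin l, ∀ i : Fin l, v i = Emat A ω V a n i j}

/-- `Δ^n_ā`, the convex hull in `ℝ^l` of the columns of `E^n_ā`. -/
def DeltaSet {l k : ℕ} (A : Fin k → Matrix (Fin l) (Fin l) ℝ) (ω : Fin k → ℝ) (V : Fin l → ℝ)
    (a : ℕ → Fin k) (n : ℕ) : Set (EuclideanSpace ℝ (Fin l)) :=
  convexHull ℝ (Ecols A ω V a n)

section MatSeq

variable {R : Type} {l k : ℕ} (A : Fin k → Matrix (Fin l) (Fin l) R)

theorem matSeq_succ' [Semiring R] :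
    ∀ (a : ℕ → Fin k) (n : ℕ), matSeq A a (n + 1) = matSeq A a n * A (a n)
  | a, 0 => by simp [matSeq]
  | a, n + 1 => by
    rw [matSeq, matSeq_succ' _ n, ← Matrix.mul_assoc]
    rfl

theorem continuous_matSeq [Semiring R] [TopologicalSpace R] [IsTopologicalSemiring R] (n : ℕ) :
    Continuous fun a : ℕ → Fin k => matSeq A a n := by
  induction n with
  | zero => exact continuous_const
  | succ n ih =>
    have hhead : Continuous fun a : ℕ → Fin k => A (a 0) :=
      continuous_of_discreteTopology.comp (continuous_apply 0)
    have htail : Continuous fun a : ℕ → Fin k => matSeq A (fun i => a (i + 1)) n :=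
      ih.comp (continuous_pi fun i => continuous_apply (i + 1))
    exact hhead.matrix_mul htail

theorem exists_pos_of_matSeq_pos [Semiring R] [PartialOrder R] (hA : ∀ i p q, 0 ≤ A i p q)
    {a : ℕ → Fin k} {n : ℕ} (h : ∀ p q, 0 < matSeq A a (n + 1) p q) (q : Fin l) :
    ∃ p, 0 < A (a n) p q := by
  by_contra! hzero
  have hcol_zero : ∀ r, A (a n) r q = 0 := fun r => ((hA _ r q).eq_of_not_lt (hzero r)).symm
  have hpos := h q q
  simp [matSeq_succ', Matrix.mul_apply, hcol_zero] at hpos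

variable [Semiring R] [PartialOrder R] [IsStrictOrderedRing R]

theorem matSeq_nonneg (hA : ∀ i p q, 0 ≤ A i p q) :
    ∀ (a : ℕ → Fin k) (n : ℕ) (p q : Fin l), 0 ≤ matSeq A a n p q
  | _, 0, p, q => Matrix.zero_le_one_elem p q
  | a, n + 1, p, q => by
    rw [matSeq, Matrix.mul_apply]
    exact Finset.sum_nonneg fun _ _ => mul_nonneg (hA _ _ _) (matSeq_nonneg hA _ n _ _)

theorem matSeq_pos_succ (hA : ∀ i p q, 0 ≤ A i p q) (hcol : ∀ i q, ∃ p, 0 < A i p q)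
    {a : ℕ → Fin k} {n : ℕ} (h : ∀ p q, 0 < matSeq A a n p q) (p q : Fin l) :
    0 < matSeq A a (n + 1) p q := by
  rw [matSeq_succ', Matrix.mul_apply]
  obtain ⟨r, hr⟩ := hcol (a n) q
  exact Finset.sum_pos' (fun s _ => mul_nonneg (matSeq_nonneg A hA a n p s) (hA _ _ _))
    ⟨r, Finset.mem_univ r, mul_pos (h p r) hr⟩

theorem matSeq_pos_of_le (hA : ∀ i p q, 0 ≤ A i p q) (hcol : ∀ i q, ∃ p, 0 < A i p q)
    {a : ℕ → Fin k} {n m : ℕ} (hnm : n ≤ m) (h : ∀ p q, 0 < matSeq A a n p q) :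
    ∀ p q, 0 < matSeq A a m p q := by
  induction m, hnm using Nat.le_induction with
  | base => exact h
  | succ m _ ih => exact matSeq_pos_succ A hA hcol ih

end MatSeq

section Compactness

variable {R : Type} {l k : ℕ} (A : Fin k → Matrix (Fin l) (Fin l) R)
  [Semiring R] [LinearOrder R] [IsStrictOrderedRing R]
  [TopologicalSpace R] [OrderClosedTopology R] [IsTopologicalSemiring R]

/-- The sets of sequences with positive product of length `N + 1` form an increasing open cover
of the compact space `{0, …, k-1}^ℕ`, so one of them is everything. -/
theorem exists_forall_matSeq_pos (hA : ∀ i p q, 0 ≤ A i p q)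
    (hprim : ∀ a : ℕ → Fin k, ∃ N, ∀ p q, 0 < matSeq A a (N + 1) p q) :
    ∃ N, ∀ (a : ℕ → Fin k) (p q : Fin l), 0 < matSeq A a (N + 1) p q := by
  have hcol : ∀ i q, ∃ p, 0 < A i p q := fun i => by
    obtain ⟨N, hN⟩ := hprim fun _ => i
    exact exists_pos_of_matSeq_pos A hA hN
  let U : ℕ → Set (ℕ → Fin k) := fun N => {a | ∀ p q, 0 < matSeq A a (N + 1) p q}
  have hopen : ∀ N, IsOpen (U N) := fun N => by
    simp only [U, Set.ofPred_forall]
    exact isOpen_iInter_of_finite fun p => isOpen_iInter_of_finite fun q =>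
      isOpen_lt continuous_const
        ((continuous_apply q).comp ((continuous_apply p).comp (continuous_matSeq A (N + 1))))
  have hmono : Monotone U := fun N M hNM _ ha => matSeq_pos_of_le A hA hcol (by omega) ha
  obtain ⟨N, hN⟩ := isCompact_univ.elim_directed_cover U hopen
    (fun a _ => Set.mem_iUnion.2 (hprim a)) hmono.directed_le
  exact ⟨N, fun a => hN (Set.mem_univ a)⟩

end Compactness

theorem bounded_primitive_general {l k : ℕ}
    (A : Fin k → Matrix (Fin l) (Fin l) ℝ)
    (hA : ∀ i : Fin k, ∀ p q : Fin l, 0 ≤ A i p q)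
    (hprim : ∀ (a : ℕ → Fin k) (n : ℕ),
      ∃ N : ℕ, ∀ p q : Fin l, 0 < matSeq A (fun m => a (n + m)) (N + 1) p q) :
    ∃ B : ℕ, ∀ (a : ℕ → Fin k) (n N : ℕ),
      IsLeast {N' : ℕ | ∀ p q : Fin l, 0 < matSeq A (fun m => a (n + m)) (N' + 1) p q} N →
      N ≤ B := by
  obtain ⟨B, hB⟩ := exists_forall_matSeq_pos A hA fun a => by simpa using hprim a 0
  exact ⟨B, fun a n N hN => hN.2 (hB _)⟩

/-- A primitive finite set of nonnegative matrices is automatically bounded primitive: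
the least `N` witnessing positivity of `A_{a_n} ⋯ A_{a_{n+N}}` is bounded uniformly in
`ā` and `n`. -/
theorem bounded_primitive {l k : ℕ} (hl : 0 < l) (hk : 0 < k)
    (A : Fin k → Matrix (Fin l) (Fin l) ℝ)
    (hA : ∀ i : Fin k, ∀ p q : Fin l, 0 ≤ A i p q)
    (hprim : ∀ (a : ℕ → Fin k) (n : ℕ),
      ∃ N : ℕ, ∀ p q : Fin l, 0 < matSeq A (fun m => a (n + m)) (N + 1) p q) :
    ∃ B : ℕ, ∀ (a : ℕ → Fin k) (n N : ℕ),
      IsLeast {N' : ℕ | ∀ p q : Fin l, 0 < matSeq A (fun m => a (n + m)) (N' + 1) p q} N →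
      N ≤ B :=
  bounded_primitive_general A hA hprim

end
end

section
/- Let $\theta'>0$ satisfy $\theta' l<1$ and $\theta' < A_{kj}V_k/V_j$ for every $N$-fold product $A$ of matrices from $\{A_1/\omega_1,\dots,A_k/\omega_k\}$ and all indices $k,j$. Then for every $\bar a\in\Sigma$ and every $n\ge 1$, the set $\Delta^{n+N}_{\bar a}$ is contained in a translate of $(1-\theta' l)\cdot\Delta^{n}_{\bar a}$; in particular $\operatorname{diam}(\Delta^{n+N}_{\bar a})\le (1-\theta' l)\operatorname{diam}(\Delta^{n}_{\bar a})$, and hence $\operatorname{diam}(\Delta^{1+mN}_{\bar a})\le \rho\,(1-\theta' l)^m$ for all $m\ge 0$, where $\rho$ is the maximum of the $k$ possible values of $\operatorname{diam}(\Delta^{1}_{\bar a})$ (which depends only on $a_1$). -/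
open Filter Topology

noncomputable section

/-!
The columns of `E^{n+N}_ā` are convex combinations of the columns `x_p` of `E^n_ā`, with
weights `c_{pj} = V_p (E^N_{σⁿā})_{pj}` (`σ` the shift): each column of weights sums to `1`
because `V` is a common left eigenvector, and every weight exceeds `θ'`. Writing
`c = θ' + (1 - θ'l) d` with `d` again column-stochastic puts every new column, hence
`Δ^{n+N}_ā`, into `θ' ∑_p x_p + (1 - θ'l) Δ^n_ā`. So diameters shrink by `1 - θ'l` every
`N` steps, and `Δ^1_ā` depends only on `a_1`.
-/

section Homothety

variable {E ι κ : Type*} [AddCommGroup E] [Module ℝ E] [Fintype ι]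

theorem sum_smul_mem_image_homothety_convexHull (x : ι → E) {c : ι → ℝ} {θ : ℝ}
    (hθ : θ * Fintype.card ι < 1) (hc : ∀ p, θ ≤ c p) (hsum : ∑ p, c p = 1) :
    ∑ p, c p • x p ∈
      (fun w => θ • ∑ p, x p + (1 - θ * Fintype.card ι) • w) '' convexHull ℝ (Set.range x) := by
  set r := 1 - θ * Fintype.card ι
  have hr : 0 < r := sub_pos.2 hθ
  refine ⟨∑ p, ((c p - θ) / r) • x p, ?_, ?_⟩
  · refine (convex_convexHull ℝ _).sum_mem (fun p _ => div_nonneg (sub_nonneg.2 (hc p)) hr.le)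
      ?_ (fun p _ => subset_convexHull ℝ _ (Set.mem_range_self p))
    rw [← Finset.sum_div, Finset.sum_sub_distrib, hsum, div_eq_one_iff_eq hr.ne']
    simp [r, mul_comm]
  · simp only [Finset.smul_sum, smul_smul, ← Finset.sum_add_distrib, ← add_smul]
    refine Finset.sum_congr rfl fun p _ => ?_
    rw [mul_div_cancel₀ _ hr.ne', add_sub_cancel]

theorem convexHull_range_sum_smul_subset (x : ι → E) (c : ι → κ → ℝ) {θ : ℝ}
    (hθ : θ * Fintype.card ι < 1) (hc : ∀ p j, θ ≤ c p j) (hsum : ∀ j, ∑ p, c p j = 1) :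
    convexHull ℝ (Set.range fun j => ∑ p, c p j • x p) ⊆
      (fun w => θ • ∑ p, x p + (1 - θ * Fintype.card ι) • w) '' convexHull ℝ (Set.range x) :=
  convexHull_min
    (Set.range_subset_iff.2 fun j =>
      sum_smul_mem_image_homothety_convexHull x hθ (hc · j) (hsum j))
    ((convex_convexHull ℝ _).affinity _ _)

end Homothety

theorem diam_le_mul_diam_of_subset_image_homothety {E : Type*} [SeminormedAddCommGroup E]
    [NormedSpace ℝ E] {s t : Set E} {v : E} {r : ℝ} (hr : 0 ≤ r) (ht : Bornology.IsBounded t)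
    (hst : s ⊆ (fun w => v + r • w) '' t) : Metric.diam s ≤ r * Metric.diam t := by
  refine Metric.diam_le_of_forall_dist_le (mul_nonneg hr Metric.diam_nonneg) ?_
  intro _ hx' _ hy'
  obtain ⟨x, hx, rfl⟩ := hst hx'
  obtain ⟨y, hy, rfl⟩ := hst hy'
  rw [dist_add_left, dist_smul₀, Real.norm_of_nonneg hr]
  exact mul_le_mul_of_nonneg_left (Metric.dist_le_diam_of_mem ht hx hy) hr

theorem le_pow_mul_of_le_mul_add {f : ℕ → ℝ} {r : ℝ} {N : ℕ} (hr : 0 ≤ r)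
    (hf : ∀ n, f (n + N) ≤ r * f n) (n m : ℕ) : f (n + m * N) ≤ r ^ m * f n := by
  induction m with
  | zero => simp
  | succ m ih =>
    calc f (n + (m + 1) * N) = f (n + m * N + N) := by rw [add_mul, one_mul, add_assoc]
      _ ≤ r * f (n + m * N) := hf _
      _ ≤ r * (r ^ m * f n) := mul_le_mul_of_nonneg_left ih hr
      _ = r ^ (m + 1) * f n := by ring

section Products

variable {l k : ℕ}

open Matrix

theorem matSeq_add {R : Type} [Semiring R] (A : Fin k → Matrix (Fin l) (Fin l) R)
    (a : ℕ → Fin k) (n N : ℕ) :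
    matSeq A a (n + N) = matSeq A a n * matSeq A (fun i => a (i + n)) N := by
  induction n generalizing a with
  | zero => simp [matSeq]
  | succ n ih =>
    rw [Nat.add_right_comm, matSeq, ih, matSeq, Matrix.mul_assoc]
    simp only [add_assoc]

theorem prodSeq_eq_prod (ω : Fin k → ℝ) (a : ℕ → Fin k) (n : ℕ) :
    prodSeq ω a n = ∏ i ∈ Finset.range n, ω (a i) := by
  induction n generalizing a with
  | zero => rfl
  | succ n ih => rw [prodSeq, ih, Finset.prod_range_succ', mul_comm]

theorem prodSeq_add (ω : Fin k → ℝ) (a : ℕ → Fin k) (n N : ℕ) :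
    prodSeq ω a (n + N) = prodSeq ω a n * prodSeq ω (fun i => a (i + n)) N := by
  simp only [prodSeq_eq_prod]
  rw [Finset.prod_range_add]
  simp only [add_comm n]

theorem prodSeq_ne_zero {ω : Fin k → ℝ} (hω : ∀ i, ω i ≠ 0) (a : ℕ → Fin k) (n : ℕ) :
    prodSeq ω a n ≠ 0 := by
  rw [prodSeq_eq_prod]
  exact Finset.prod_ne_zero_iff.2 fun i _ => hω (a i)

theorem prodSeq_inv (ω : Fin k → ℝ) (a : ℕ → Fin k) (n : ℕ) :
    prodSeq (fun i => (ω i)⁻¹) a n = (prodSeq ω a n)⁻¹ := by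
  simp only [prodSeq_eq_prod, Finset.prod_inv_distrib]

theorem matSeq_smul (c : Fin k → ℝ) (A : Fin k → Matrix (Fin l) (Fin l) ℝ) (a : ℕ → Fin k)
    (n : ℕ) : matSeq (fun i => c i • A i) a n = prodSeq c a n • matSeq A a n := by
  induction n generalizing a with
  | zero => simp [matSeq, prodSeq]
  | succ n ih =>
    rw [matSeq, matSeq, prodSeq, ih, Matrix.smul_mul, Matrix.mul_smul, smul_smul]

theorem vecMul_matSeq {A : Fin k → Matrix (Fin l) (Fin l) ℝ} {ω : Fin k → ℝ} {V : Fin l → ℝ}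
    (hV : ∀ i, V ᵥ* A i = ω i • V) (a : ℕ → Fin k) (n : ℕ) :
    V ᵥ* matSeq A a n = prodSeq ω a n • V := by
  induction n generalizing a with
  | zero => simp [matSeq, prodSeq]
  | succ n ih =>
    rw [matSeq, prodSeq, ← Matrix.vecMul_vecMul, hV, Matrix.smul_vecMul, ih, smul_smul]

end Products

section DeltaSet

variable {l k : ℕ} (A : Fin k → Matrix (Fin l) (Fin l) ℝ) (ω : Fin k → ℝ) (V : Fin l → ℝ)

open Matrix

theorem Emat_add (hω : ∀ i, ω i ≠ 0) (hV : ∀ p, V p ≠ 0) (a : ℕ → Fin k) (n N : ℕ)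
    (i j : Fin l) :
    Emat A ω V a (n + N) i j =
      ∑ p, (V p * Emat A ω V (fun i => a (i + n)) N p j) * Emat A ω V a n i p := by
  have := prodSeq_ne_zero hω a n
  have := prodSeq_ne_zero hω (fun i => a (i + n)) N
  simp only [Emat, matSeq_add, prodSeq_add, Matrix.mul_apply, Finset.sum_div]
  refine Finset.sum_congr rfl fun p _ => ?_
  have := hV p
  have := hV j
  field_simp

theorem sum_mul_Emat (hω : ∀ i, ω i ≠ 0) (hV : ∀ p, V p ≠ 0) (heig : ∀ i, V ᵥ* A i = ω i • V)
    (a : ℕ → Fin k) (n : ℕ) (j : Fin l) : ∑ p, V p * Emat A ω V a n p j = 1 := by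
  have h := congrFun (vecMul_matSeq heig a n) j
  simp only [vecMul, dotProduct, Pi.smul_apply, smul_eq_mul] at h
  simp only [Emat, mul_div_assoc']
  rw [← Finset.sum_div, h, div_self (mul_ne_zero (prodSeq_ne_zero hω a n) (hV j))]

theorem mul_Emat_eq (a : ℕ → Fin k) (n : ℕ) (p j : Fin l) :
    V p * Emat A ω V a n p j = matSeq (fun i => (ω i)⁻¹ • A i) a n p j * V p / V j := by
  simp only [Emat, matSeq_smul, prodSeq_inv, Matrix.smul_apply, smul_eq_mul]
  ring

theorem Ecols_eq_range (a : ℕ → Fin k) (n : ℕ) :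
    Ecols A ω V a n = Set.range fun j => WithLp.toLp 2 fun i => Emat A ω V a n i j := by
  ext v
  exact exists_congr fun j => ⟨fun h => PiLp.ext fun i => (h i).symm, fun h i => h ▸ rfl⟩

theorem isBounded_DeltaSet (a : ℕ → Fin k) (n : ℕ) : Bornology.IsBounded (DeltaSet A ω V a n) :=
  ((Ecols_eq_range A ω V a n ▸ Set.finite_range _ : (Ecols A ω V a n).Finite).isCompact_convexHull
    ℝ).isBounded

variable {A ω V} {N : ℕ} {θ : ℝ}

theorem DeltaSet_add_subset_image_homothety (hω : ∀ i, ω i ≠ 0) (hV : ∀ p, V p ≠ 0)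
    (heig : ∀ i, V ᵥ* A i = ω i • V) (hθ : θ * l < 1)
    (hθN : ∀ (b : ℕ → Fin k) (p q : Fin l),
      θ ≤ matSeq (fun i => (ω i)⁻¹ • A i) b N p q * V p / V q)
    (a : ℕ → Fin k) (n : ℕ) :
    DeltaSet A ω V a (n + N) ⊆
      (fun w => θ • (∑ p, WithLp.toLp 2 fun i => Emat A ω V a n i p) + (1 - θ * l) • w) ''
        DeltaSet A ω V a n := by
  set c := fun p j => V p * Emat A ω V (fun i => a (i + n)) N p j
  have hcol : (fun j => WithLp.toLp 2 fun i => Emat A ω V a (n + N) i j) =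
      fun j => ∑ p, c p j • WithLp.toLp 2 fun i => Emat A ω V a n i p := by
    funext j
    ext i
    simp [Emat_add A ω V hω hV, c]
  rw [DeltaSet, DeltaSet, Ecols_eq_range, Ecols_eq_range, hcol]
  simpa using convexHull_range_sum_smul_subset _ c (by simpa using hθ)
    (fun p j => (hθN _ p j).trans_eq (mul_Emat_eq A ω V _ N p j).symm)
    (sum_mul_Emat A ω V hω hV heig _ N)

theorem diam_DeltaSet_add_le (hω : ∀ i, ω i ≠ 0) (hV : ∀ p, V p ≠ 0)
    (heig : ∀ i, V ᵥ* A i = ω i • V) (hθ : θ * l < 1)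
    (hθN : ∀ (b : ℕ → Fin k) (p q : Fin l),
      θ ≤ matSeq (fun i => (ω i)⁻¹ • A i) b N p q * V p / V q)
    (a : ℕ → Fin k) (n : ℕ) :
    Metric.diam (DeltaSet A ω V a (n + N)) ≤ (1 - θ * l) * Metric.diam (DeltaSet A ω V a n) :=
  diam_le_mul_diam_of_subset_image_homothety (by linarith) (isBounded_DeltaSet A ω V a n)
    (DeltaSet_add_subset_image_homothety hω hV heig hθ hθN a n)

theorem diam_DeltaSet_one_le_iSup (a : ℕ → Fin k) :
    Metric.diam (DeltaSet A ω V a 1) ≤ ⨆ i, Metric.diam (DeltaSet A ω V (fun _ => i) 1) := by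
  have h : DeltaSet A ω V a 1 = DeltaSet A ω V (fun _ => a 0) 1 := rfl
  rw [h]
  exact le_ciSup (f := fun i => Metric.diam (DeltaSet A ω V (fun _ => i) 1))
    (Set.finite_range _).bddAbove (a 0)

end DeltaSet

theorem delta_contraction_general {l k : ℕ}
    (A : Fin k → Matrix (Fin l) (Fin l) ℝ) (ω : Fin k → ℝ) (V : Fin l → ℝ)
    (hω : ∀ i, 0 < ω i) (hV : ∀ p, 0 < V p)
    (heig : ∀ i : Fin k, ∀ j : Fin l, ∑ p, V p * A i p j = ω i * V j)
    (N : ℕ)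
    (θ' : ℝ) (hθ'l : θ' * l < 1)
    (hθ'small : ∀ (b : ℕ → Fin k) (p q : Fin l),
      θ' < matSeq (fun i => (ω i)⁻¹ • A i) b N p q * V p / V q) :
    ∀ (a : ℕ → Fin k) (n : ℕ), 1 ≤ n →
      (∃ v : EuclideanSpace ℝ (Fin l),
        DeltaSet A ω V a (n + N) ⊆ (fun w => v + (1 - θ' * l) • w) '' DeltaSet A ω V a n) ∧
      Metric.diam (DeltaSet A ω V a (n + N)) ≤ (1 - θ' * l) * Metric.diam (DeltaSet A ω V a n) ∧
      ∀ m : ℕ, Metric.diam (DeltaSet A ω V a (1 + m * N)) ≤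
        (⨆ i : Fin k, Metric.diam (DeltaSet A ω V (fun _ => i) 1)) * (1 - θ' * l) ^ m := by
  have hω₀ : ∀ i, ω i ≠ 0 := fun i => (hω i).ne'
  have hV₀ : ∀ p, V p ≠ 0 := fun p => (hV p).ne'
  have hVA : ∀ i, Matrix.vecMul V (A i) = ω i • V := fun i => funext (heig i)
  have hθ'N := fun b p q => (hθ'small b p q).le
  have hr : 0 ≤ 1 - θ' * l := by linarith
  intro a n _
  refine ⟨⟨_, DeltaSet_add_subset_image_homothety hω₀ hV₀ hVA hθ'l hθ'N a n⟩,
    diam_DeltaSet_add_le hω₀ hV₀ hVA hθ'l hθ'N a n, fun m => ?_⟩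
  calc Metric.diam (DeltaSet A ω V a (1 + m * N))
      ≤ (1 - θ' * l) ^ m * Metric.diam (DeltaSet A ω V a 1) :=
        le_pow_mul_of_le_mul_add (f := fun n => Metric.diam (DeltaSet A ω V a n)) hr
          (diam_DeltaSet_add_le hω₀ hV₀ hVA hθ'l hθ'N a) 1 m
    _ ≤ (1 - θ' * l) ^ m * ⨆ i, Metric.diam (DeltaSet A ω V (fun _ => i) 1) :=
        mul_le_mul_of_nonneg_left (diam_DeltaSet_one_le_iSup a) (pow_nonneg hr m)
    _ = _ := mul_comm _ _

/-- Contraction of the nested convex hulls: `Δ^{n+N}_ā` is contained in a translate of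
`(1-θ'l)·Δ^n_ā`, the diameters contract by the factor `1-θ'l`, and hence
`diam Δ^{1+mN}_ā ≤ ρ (1-θ'l)^m` with `ρ` the maximum of the `k` possible values of
`diam Δ^1_ā` (which depends only on `a 0`). -/
theorem delta_contraction {l k : ℕ} (hl : 0 < l) (hk : 0 < k)
    (A : Fin k → Matrix (Fin l) (Fin l) ℝ) (ω : Fin k → ℝ) (V : Fin l → ℝ)
    (hA : ∀ i : Fin k, ∀ p q : Fin l, 0 ≤ A i p q)
    (hω : ∀ i, 0 < ω i) (hV : ∀ p, 0 < V p)
    (heig : ∀ i : Fin k, ∀ j : Fin l, ∑ p, V p * A i p j = ω i * V j)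
    (N : ℕ) (hN : 0 < N)
    (hpos : ∀ (b : ℕ → Fin k) (p q : Fin l),
      0 < matSeq (fun i => (ω i)⁻¹ • A i) b N p q)
    (θ' : ℝ) (hθ'pos : 0 < θ') (hθ'l : θ' * l < 1)
    (hθ'small : ∀ (b : ℕ → Fin k) (p q : Fin l),
      θ' < matSeq (fun i => (ω i)⁻¹ • A i) b N p q * V p / V q) :
    ∀ (a : ℕ → Fin k) (n : ℕ), 1 ≤ n →
      (∃ v : EuclideanSpace ℝ (Fin l),
        DeltaSet A ω V a (n + N) ⊆ (fun w => v + (1 - θ' * l) • w) '' DeltaSet A ω V a n) ∧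
      Metric.diam (DeltaSet A ω V a (n + N)) ≤ (1 - θ' * l) * Metric.diam (DeltaSet A ω V a n) ∧
      ∀ m : ℕ, Metric.diam (DeltaSet A ω V a (1 + m * N)) ≤
        (⨆ i : Fin k, Metric.diam (DeltaSet A ω V (fun _ => i) 1)) * (1 - θ' * l) ^ m :=
  delta_contraction_general A ω V hω hV heig N θ' hθ'l hθ'small

end
end
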